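/- Let G be a finite simple graph on n vertices with no isolated vertices. Then avd(G) ≤ n/2 + Σ_{v ∈ V(G)} deg(v)/(2^{deg(v)+1} − 2). -/

import Mathlib

open Finset

/-- `S` is a dominating set of `G`: every vertex is in `S` or adjacent to a vertex of `S`. -/
def SimpleGraph.IsDomSet {V : Type*} (G : SimpleGraph V) (S : Finset V) : Prop :=
  ∀ v : V, v ∈ S ∨ ∃ u ∈ S, G.Adj u v

/-- The family of all dominating sets of `G`. -/
noncomputable def SimpleGraph.domSets {V : Type*} [Fintype V] (G : SimpleGraph V) :
    Finset (Finset V) :=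
  @Finset.filter _ (fun S => G.IsDomSet S) (Classical.decPred _) Finset.univ

/-- The average order (cardinality) of a dominating set of `G`. -/
noncomputable def SimpleGraph.avd {V : Type*} [Fintype V] (G : SimpleGraph V) : ℝ :=
  (∑ S ∈ G.domSets, (S.card : ℝ)) / (G.domSets).card

/-!
Double counting gives `∑_S |S| = ∑_v #{S ∋ v}`. A dominating set `S ∋ v` either stays dominating
without `v` (and these sets inject into those avoiding `v`), or `v` is the only vertex of `S` in
the closed neighbourhood `N[w]` of some `w`. Hence `2 ∑_S |S| ≤ n |D| + ∑_w b_w`, where `b_w`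
counts the dominating sets meeting `N[w]` in exactly one vertex.

To bound `b_w`, fix the part `R` of `S` outside `N[w]` and let `K` be the set of `x ∈ N[w]` with
`R ∪ {x}` dominating. At most `|K|` sets of this fibre meet `N[w]` once, while every `R ∪ I` with
`I ⊆ N[w]` meeting `K` dominates, which gives `2^(d+1) - 2^(d+1-|K|)` sets, `d = deg w`.
Comparing, `(2^d - 1) b_w ≤ d |D|`.
-/

theorem Nat.two_pow_sub_one_mul_le {m k : ℕ} (hk : k ≤ m + 1) :
    (2 ^ m - 1) * k ≤ m * (2 ^ (m + 1) - 2 ^ (m + 1 - k)) := by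
  have hpow : 1 ≤ 2 ^ m := Nat.one_le_two_pow
  rcases Nat.eq_zero_or_pos k with rfl | hk0
  · simp
  rcases hk.lt_or_eq with hkm | rfl
  · calc (2 ^ m - 1) * k ≤ 2 ^ m * m := Nat.mul_le_mul (Nat.sub_le _ _) (by omega)
      _ ≤ m * (2 ^ (m + 1) - 2 ^ (m + 1 - k)) := by
        have : 2 ^ (m + 1 - k) ≤ 2 ^ m := Nat.pow_le_pow_right (by norm_num) (by omega)
        rw [Nat.mul_comm, pow_succ]
        exact Nat.mul_le_mul_left _ (by omega)
  · rw [Nat.sub_self, pow_zero, pow_succ]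
    rcases Nat.eq_zero_or_pos m with rfl | hm
    · simp
    · zify [hpow, show 1 ≤ 2 ^ m * 2 by omega]
      nlinarith

namespace Finset

variable {α : Type*} [DecidableEq α]

theorem two_mul_card_filter_mem_le (𝒜 : Finset (Finset α)) (a : α) :
    2 * #{S ∈ 𝒜 | a ∈ S} ≤ #𝒜 + #{S ∈ 𝒜 | a ∈ S ∧ S.erase a ∉ 𝒜} := by
  have herase : #{S ∈ 𝒜 | a ∈ S ∧ S.erase a ∈ 𝒜} ≤ #{S ∈ 𝒜 | a ∉ S} := by
    refine card_le_card_of_injOn (·.erase a) (fun S hS => ?_) (fun S hS T hT h => ?_)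
    · simp only [coe_filter, Set.mem_ofPred_eq] at hS ⊢
      exact ⟨hS.2.2, notMem_erase a S⟩
    · simp only [coe_filter, Set.mem_ofPred_eq] at hS hT
      rw [← insert_erase hS.2.1, ← insert_erase hT.2.1]
      exact congrArg (insert a) h
  have hsplit := card_filter_add_card_filter_not (s := 𝒜) (p := fun S => a ∈ S)
  have hsplit' := card_filter_add_card_filter_not
    (s := {S ∈ 𝒜 | a ∈ S}) (p := fun S => S.erase a ∈ 𝒜)
  simp only [filter_filter] at hsplit'
  omega

theorem card_filter_not_disjoint_powerset {K N : Finset α} (hK : K ⊆ N) :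
    #{I ∈ N.powerset | ¬Disjoint I K} = 2 ^ #N - 2 ^ (#N - #K) := by
  have hdisj : {I ∈ N.powerset | Disjoint I K} = (N \ K).powerset := by
    ext I
    simp [subset_sdiff]
  have hsplit := card_filter_add_card_filter_not (s := N.powerset) (p := (Disjoint · K))
  rw [hdisj, card_powerset, card_powerset, card_sdiff_of_subset hK] at hsplit
  omega

theorem pow_sub_one_mul_card_filter_inter_eq_one_le_of_sdiff_eq {𝒜 : Finset (Finset α)}
    (h𝒜 : IsUpperSet (𝒜 : Set (Finset α))) {N R : Finset α} {m : ℕ} (hN : #N = m + 1)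
    (hR : Disjoint R N) :
    (2 ^ m - 1) * #{S ∈ 𝒜 | #(S ∩ N) = 1 ∧ S \ N = R} ≤ m * #{S ∈ 𝒜 | S \ N = R} := by
  set K := {x ∈ N | insert x R ∈ 𝒜}
  have hKN : K ⊆ N := filter_subset _ _
  have hsingle : #{S ∈ 𝒜 | #(S ∩ N) = 1 ∧ S \ N = R} ≤ #K := by
    refine (card_le_card fun S hS => ?_).trans (card_image_le (f := (insert · R)))
    obtain ⟨hS𝒜, hSN, hSR⟩ := mem_filter.mp hS
    obtain ⟨a, ha⟩ := card_eq_one.mp hSN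
    have hSa : insert a R = S := by
      rw [← sdiff_union_inter S N, hSR, ha, union_singleton]
    have haN : a ∈ N := (mem_inter.mp (ha ▸ mem_singleton_self a)).2
    exact mem_image.mpr ⟨a, mem_filter.mpr ⟨haN, hSa ▸ hS𝒜⟩, hSa⟩
  have hlarge : #{I ∈ N.powerset | ¬Disjoint I K} ≤ #{S ∈ 𝒜 | S \ N = R} := by
    refine card_le_card_of_injOn (R ∪ ·) (fun I hI => ?_) (fun I hI J hJ h => ?_)
    · simp only [coe_filter, mem_powerset, Set.mem_ofPred_eq, not_disjoint_iff] at hI ⊢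
      obtain ⟨hIN, x, hxI, hxK⟩ := hI
      refine ⟨h𝒜 (insert_subset (mem_union_right R hxI) subset_union_left) (mem_filter.mp hxK).2,
        ?_⟩
      rw [union_sdiff_distrib, sdiff_eq_self_of_disjoint hR, sdiff_eq_empty_iff_subset.mpr hIN,
        union_empty]
    · simp only [coe_filter, mem_powerset, Set.mem_ofPred_eq] at hI hJ
      rw [← union_sdiff_cancel_left (hR.mono_right hI.1),
        ← union_sdiff_cancel_left (hR.mono_right hJ.1)]
      exact congrArg (· \ R) h
  calc (2 ^ m - 1) * #{S ∈ 𝒜 | #(S ∩ N) = 1 ∧ S \ N = R}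
      ≤ (2 ^ m - 1) * #K := Nat.mul_le_mul_left _ hsingle
    _ ≤ m * (2 ^ (m + 1) - 2 ^ (m + 1 - #K)) :=
      Nat.two_pow_sub_one_mul_le (hN ▸ card_le_card hKN)
    _ = m * #{I ∈ N.powerset | ¬Disjoint I K} := by
      rw [card_filter_not_disjoint_powerset hKN, hN]
    _ ≤ m * #{S ∈ 𝒜 | S \ N = R} := Nat.mul_le_mul_left _ hlarge

theorem pow_sub_one_mul_card_filter_inter_eq_one_le {𝒜 : Finset (Finset α)}
    (h𝒜 : IsUpperSet (𝒜 : Set (Finset α))) {N : Finset α} {m : ℕ} (hN : #N = m + 1) :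
    (2 ^ m - 1) * #{S ∈ 𝒜 | #(S ∩ N) = 1} ≤ m * #𝒜 := by
  have hfib := card_eq_sum_card_fiberwise (f := (· \ N)) (t := 𝒜.image (· \ N))
    (fun S hS => mem_image_of_mem _ hS)
  rw [card_eq_sum_card_fiberwise (f := (· \ N)) (t := 𝒜.image (· \ N))
    (fun S hS => mem_image_of_mem _ (mem_filter.mp hS).1), hfib, mul_sum, mul_sum]
  refine sum_le_sum fun R hR => ?_
  obtain ⟨S, -, rfl⟩ := mem_image.mp hR
  rw [filter_filter]
  exact pow_sub_one_mul_card_filter_inter_eq_one_le_of_sdiff_eq h𝒜 hN sdiff_disjoint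

end Finset

namespace SimpleGraph

variable {V : Type*}

theorem IsDomSet.mono {G : SimpleGraph V} {S T : Finset V} (hST : S ⊆ T) (hS : G.IsDomSet S) :
    G.IsDomSet T := fun v =>
  (hS v).imp (fun hv => hST hv) fun ⟨u, hu, huv⟩ => ⟨u, hST hu, huv⟩

variable (G : SimpleGraph V) [Fintype V]

theorem mem_domSets {S : Finset V} : S ∈ G.domSets ↔ G.IsDomSet S := by
  simp [domSets]

theorem isUpperSet_domSets : IsUpperSet (G.domSets : Set (Finset V)) := fun _ _ hST hS =>
  G.mem_domSets.mpr (IsDomSet.mono hST (G.mem_domSets.mp hS))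

theorem domSets_nonempty : G.domSets.Nonempty :=
  ⟨univ, G.mem_domSets.mpr fun v => Or.inl (mem_univ v)⟩

variable [DecidableRel G.Adj] [DecidableEq V]

def closedNbhd (w : V) : Finset V := insert w (G.neighborFinset w)

theorem mem_closedNbhd {w x : V} : x ∈ G.closedNbhd w ↔ x = w ∨ G.Adj w x := by
  simp [closedNbhd]

theorem card_closedNbhd (w : V) : #(G.closedNbhd w) = G.degree w + 1 :=
  card_insert_of_notMem (by simp)

theorem exists_inter_closedNbhd_eq_singleton {S : Finset V} (hS : G.IsDomSet S) {v : V}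
    (hv : v ∈ S) (hSv : ¬G.IsDomSet (S.erase v)) : ∃ w, S ∩ G.closedNbhd w = {v} := by
  simp only [IsDomSet, not_forall, not_or, not_exists, not_and] at hSv
  obtain ⟨w, hw, hnadj⟩ := hSv
  refine ⟨w, eq_singleton_iff_unique_mem.mpr ⟨mem_inter.mpr ⟨hv, ?_⟩, fun x hx => ?_⟩⟩
  · rw [mem_closedNbhd]
    rcases hS w with hwS | ⟨u, huS, huw⟩
    · exact Or.inl (by_contra fun hvw => hw (mem_erase.mpr ⟨Ne.symm hvw, hwS⟩))
    · obtain rfl : u = v := by_contra fun huv => hnadj u (mem_erase.mpr ⟨huv, huS⟩) huw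
      exact Or.inr huw.symm
  · obtain ⟨hxS, hxw⟩ := mem_inter.mp hx
    by_contra hxv
    have hx' : x ∈ S.erase v := mem_erase.mpr ⟨hxv, hxS⟩
    rcases (G.mem_closedNbhd).mp hxw with rfl | hwx
    · exact hw hx'
    · exact hnadj x hx' hwx.symm

theorem card_filter_erase_notMem_domSets_le {S : Finset V} (hS : G.IsDomSet S) :
    #{v ∈ S | S.erase v ∉ G.domSets} ≤ #{w | #(S ∩ G.closedNbhd w) = 1} :=
  calc #{v ∈ S | S.erase v ∉ G.domSets}
      ≤ #(({w | #(S ∩ G.closedNbhd w) = 1} : Finset V).biUnion (S ∩ G.closedNbhd ·)) := by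
        refine card_le_card fun v hv => ?_
        obtain ⟨hvS, hSv⟩ := mem_filter.mp hv
        obtain ⟨w, hw⟩ := G.exists_inter_closedNbhd_eq_singleton hS hvS
          (mt G.mem_domSets.mpr hSv)
        exact mem_biUnion.mpr ⟨w, by simp [hw], by simp [hw]⟩
    _ ≤ ∑ w with #(S ∩ G.closedNbhd w) = 1, #(S ∩ G.closedNbhd w) := card_biUnion_le
    _ = #{w | #(S ∩ G.closedNbhd w) = 1} := by
        rw [card_eq_sum_ones]
        exact sum_congr rfl fun w hw => (mem_filter.mp hw).2

theorem two_mul_sum_card_domSets_le :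
    2 * ∑ S ∈ G.domSets, #S ≤
      Fintype.card V * #G.domSets + ∑ w, #{S ∈ G.domSets | #(S ∩ G.closedNbhd w) = 1} := by
  have hsum : ∑ S ∈ G.domSets, #S = ∑ v, #{S ∈ G.domSets | v ∈ S} := by
    simpa [bipartiteAbove, bipartiteBelow] using
      (sum_card_bipartiteAbove_eq_sum_card_bipartiteBelow (· ∈ ·) (s := univ) (t := G.domSets)).symm
  have hcrit : ∑ v, #{S ∈ G.domSets | v ∈ S ∧ S.erase v ∉ G.domSets} ≤
      ∑ w, #{S ∈ G.domSets | #(S ∩ G.closedNbhd w) = 1} :=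
    calc ∑ v, #{S ∈ G.domSets | v ∈ S ∧ S.erase v ∉ G.domSets}
        = ∑ S ∈ G.domSets, #{v ∈ S | S.erase v ∉ G.domSets} := by
          have := sum_card_bipartiteAbove_eq_sum_card_bipartiteBelow
            (fun v S => v ∈ S ∧ S.erase v ∉ G.domSets) (s := univ) (t := G.domSets)
          simp only [bipartiteAbove, bipartiteBelow] at this
          rw [this]
          refine sum_congr rfl fun S _ => congrArg card ?_
          ext v
          simp
      _ ≤ ∑ S ∈ G.domSets, #{w | #(S ∩ G.closedNbhd w) = 1} :=
          sum_le_sum fun S hS => G.card_filter_erase_notMem_domSets_le (G.mem_domSets.mp hS)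
      _ = ∑ w, #{S ∈ G.domSets | #(S ∩ G.closedNbhd w) = 1} :=
          (sum_card_bipartiteAbove_eq_sum_card_bipartiteBelow
            (fun S w => #(S ∩ G.closedNbhd w) = 1) (s := G.domSets) (t := univ))
  calc 2 * ∑ S ∈ G.domSets, #S = ∑ v, 2 * #{S ∈ G.domSets | v ∈ S} := by rw [hsum, mul_sum]
    _ ≤ ∑ v, (#G.domSets + #{S ∈ G.domSets | v ∈ S ∧ S.erase v ∉ G.domSets}) :=
        sum_le_sum fun v _ => two_mul_card_filter_mem_le G.domSets v
    _ ≤ _ := by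
        rw [sum_add_distrib, sum_const, card_univ, smul_eq_mul]
        exact Nat.add_le_add_left hcrit _

theorem pow_degree_sub_one_mul_card_le (w : V) :
    (2 ^ G.degree w - 1) * #{S ∈ G.domSets | #(S ∩ G.closedNbhd w) = 1} ≤
      G.degree w * #G.domSets :=
  pow_sub_one_mul_card_filter_inter_eq_one_le G.isUpperSet_domSets (G.card_closedNbhd w)

theorem avd_le_half_card_add_sum :
    G.avd ≤ Fintype.card V / 2 +
      ∑ w, (#{S ∈ G.domSets | #(S ∩ G.closedNbhd w) = 1} : ℝ) / (2 * #G.domSets) := by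
  have hD : (0 : ℝ) < #G.domSets := by exact_mod_cast G.domSets_nonempty.card_pos
  have h : 2 * ∑ S ∈ G.domSets, (#S : ℝ) ≤
      Fintype.card V * #G.domSets + ∑ w, (#{S ∈ G.domSets | #(S ∩ G.closedNbhd w) = 1} : ℝ) := by
    exact_mod_cast G.two_mul_sum_card_domSets_le
  rw [avd, ← sum_div, div_add_div _ _ two_ne_zero (by positivity),
    div_le_div_iff₀ hD (by positivity)]
  nlinarith

theorem card_filter_inter_closedNbhd_div_le {w : V} (hw : 0 < G.degree w) :
    (#{S ∈ G.domSets | #(S ∩ G.closedNbhd w) = 1} : ℝ) / (2 * #G.domSets) ≤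
      G.degree w / (2 ^ (G.degree w + 1) - 2) := by
  have hD : (0 : ℝ) < #G.domSets := by exact_mod_cast G.domSets_nonempty.card_pos
  have hpow : (2 : ℝ) ≤ 2 ^ G.degree w := by
    exact_mod_cast Nat.le_self_pow hw.ne' 2
  have h : ((2 : ℝ) ^ G.degree w - 1) * #{S ∈ G.domSets | #(S ∩ G.closedNbhd w) = 1} ≤
      G.degree w * #G.domSets := by
    have := G.pow_degree_sub_one_mul_card_le w
    rw [← Nat.cast_le (α := ℝ), Nat.cast_mul, Nat.cast_sub Nat.one_le_two_pow] at this
    exact_mod_cast this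
  rw [div_le_div_iff₀ (by positivity) (by rw [pow_succ]; linarith), pow_succ]
  nlinarith

end SimpleGraph

/-- For a graph `G` on `n` vertices with no isolated vertices,
`avd(G) ≤ n/2 + Σ_{v} deg(v)/(2^(deg(v)+1) − 2)`. -/
theorem avd_le_half_add_degree_sum {V : Type*} [Fintype V] (G : SimpleGraph V)
    [DecidableRel G.Adj] (n : ℕ) (hn : n = Fintype.card V)
    (hiso : ∀ v : V, 0 < G.degree v) :
    G.avd ≤ (n : ℝ) / 2 +
      ∑ v : V, (G.degree v : ℝ) / (2 ^ (G.degree v + 1) - 2) := by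
  classical
  subst hn
  exact G.avd_le_half_card_add_sum.trans <| add_le_add le_rfl <|
    sum_le_sum fun w _ => G.card_filter_inter_closedNbhd_div_le (hiso w)
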